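/- arXiv:1008.5273 — 5 statements merged into one kernel-verified Lean document; each statement's English description precedes it below -/
import Mathlib

section
/- Let T be a Hausdorff topological space and U ⊂ T a dense open subset. Assume there exists a basis 𝓑 of open subsets of T such that every B ∈ 𝓑 is connected and B ∩ U has finitely many connected components. Then any continuous function f : T → ℂ which is locally constant on U is locally constant on T. -/
open Set

lemma finite_preconnected_subsingleton {X : Type*} [TopologicalSpace X] [T1Space X]
    {s : Set X} (hs : IsPreconnected s) (hfin : s.Finite) : s.Subsingleton := by
  intro a ha b hb
  by_contra hab
  have hu : IsOpen ({b}ᶜ : Set X) := isOpen_compl_singleton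
  have hv : IsOpen ((s \ {b})ᶜ : Set X) := ((hfin.subset diff_subset).isClosed).isOpen_compl
  have hsub : s ⊆ {b}ᶜ ∪ (s \ {b})ᶜ := by
    intro x hx
    by_cases hxb : x = b
    · exact Or.inr (by simp [hxb])
    · exact Or.inl hxb
  have h1 : (s ∩ {b}ᶜ).Nonempty := ⟨a, ha, hab⟩
  have h2 : (s ∩ (s \ {b})ᶜ).Nonempty := ⟨b, hb, by simp⟩
  obtain ⟨x, hxs, hx1, hx2⟩ := hs _ _ hu hv hsub h1 h2
  exact hx2 ⟨hxs, hx1⟩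

/-- If `T` is a Hausdorff space, `U ⊆ T` a dense open subset, and there is a basis `𝓑`
of open sets of `T` such that every `B ∈ 𝓑` is connected and `B ∩ U` has finitely many
connected components, then any continuous `f : T → ℂ` that is locally constant on `U`
is locally constant on `T`. -/
theorem stmt_0 {T : Type*} [TopologicalSpace T] [T2Space T]
    (U : Set T) (hUopen : IsOpen U) (hUdense : Dense U)
    (𝓑 : Set (Set T)) (hbasis : TopologicalSpace.IsTopologicalBasis 𝓑)
    (hconn : ∀ B ∈ 𝓑, IsConnected B)
    (hfin : ∀ B ∈ 𝓑, Finite (ConnectedComponents ↥(B ∩ U)))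
    (f : T → ℂ) (hf : Continuous f)
    (hloc : IsLocallyConstant (fun x : U => f x)) :
    IsLocallyConstant f := by
  rw [IsLocallyConstant.iff_exists_open]
  intro x
  obtain ⟨B, hB, hxB, -⟩ := hbasis.exists_subset_of_mem_open (mem_univ x) isOpen_univ
  refine ⟨B, hbasis.isOpen hB, hxB, ?_⟩
  -- the function restricted to B ∩ U is locally constant
  set g : ↥(B ∩ U) → ℂ := fun y => f y with hg
  have hgl : IsLocallyConstant g := by
    have : g = (fun x : U => f x) ∘ (inclusion (inter_subset_right : B ∩ U ⊆ U)) := rfl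
    rw [this]
    exact hloc.comp_continuous (continuous_inclusion _)
  haveI := hfin B hB
  -- g is constant on connected components, so its range is finite
  have hrange : range g ⊆ range (fun c : ConnectedComponents ↥(B ∩ U) => g c.out) := by
    rintro _ ⟨y, rfl⟩
    refine ⟨ConnectedComponents.mk y, ?_⟩
    have hy : (ConnectedComponents.mk y).out ∈ connectedComponent y := by
      have : ConnectedComponents.mk (ConnectedComponents.mk y).out = ConnectedComponents.mk y :=
        Quotient.out_eq _
      rw [ConnectedComponents.coe_eq_coe] at this
      rw [← this]
      exact mem_connectedComponent
    exact hgl.apply_eq_of_isPreconnected isPreconnected_connectedComponent hy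
      mem_connectedComponent
  have hfinrange : (f '' (B ∩ U)).Finite := by
    rw [image_eq_range]
    exact (finite_range _).subset hrange
  -- B ⊆ closure (B ∩ U), so f '' B ⊆ f '' (B ∩ U)
  have hBsub : B ⊆ closure (B ∩ U) := hUdense.open_subset_closure_inter (hbasis.isOpen hB)
  have himg : f '' B ⊆ f '' (B ∩ U) := by
    intro z hz
    obtain ⟨y, hy, rfl⟩ := hz
    exact hfinrange.isClosed.closure_subset
      ((image_closure_subset_closure_image hf) (mem_image_of_mem f (hBsub hy)))
  -- f '' B is finite and preconnected, hence a singleton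
  have hpre : IsPreconnected (f '' B) := (hconn B hB).isPreconnected.image f hf.continuousOn
  have hsub : (f '' B).Subsingleton :=
    finite_preconnected_subsingleton hpre (hfinrange.subset himg)
  intro y hy
  exact hsub (mem_image_of_mem f hy) (mem_image_of_mem f hxB)
end

section
/- Let A be a left Noetherian ring, φ a ring automorphism of A, and ψ : A → A an additive map satisfying ψ(ab) = ψ(a)b + φ(a)ψ(b) for all a,b ∈ A (a φ-twisted derivation). Then the Ore extension A⟨S; φ, ψ⟩, i.e. the ring of polynomials in S with coefficients in A and multiplication rule S·a = φ(a)·S + ψ(a), is left Noetherian. -/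
/-- Hilbert basis theorem for Ore extensions: if `A` is left Noetherian, `φ` a ring
automorphism of `A` and `ψ` a `φ`-twisted derivation, then the Ore extension
`A⟨S; φ, ψ⟩` (here: a ring `B` containing `A` via `ι`, free as a left `A`-module with
basis the powers of `S`, with `S * a = φ(a) * S + ψ(a)`) is left Noetherian. -/
theorem stmt_1 {A B : Type*} [Ring A] [Ring B] [IsNoetherianRing A]
    (φ : A ≃+* A) (ψ : A →+ A)
    (hψ : ∀ a b : A, ψ (a * b) = ψ a * b + φ a * ψ b)
    (ι : A →+* B) (S : B)
    (hS : ∀ a : A, S * ι a = ι (φ a) * S + ι (ψ a))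
    [Module A B] (hsmul : ∀ (a : A) (b : B), a • b = ι a * b)
    (basis : Module.Basis ℕ A B) (hbasis : ∀ n : ℕ, basis n = S ^ n) :
    IsNoetherianRing B := by
  classical
  have hψ1 : ψ 1 = 0 := by
    have h := hψ 1 1
    simp only [mul_one, one_mul, map_one] at h
    exact (left_eq_add.mp h)
  -- coefficient of `ι a * f`
  have hcs : ∀ (a : A) (f : B) (m : ℕ), basis.repr (ι a * f) m = a * basis.repr f m := by
    intro a f m
    rw [← hsmul, map_smul, Finsupp.smul_apply, smul_eq_mul]
  have hadd : ∀ (u v : B) (m : ℕ), basis.repr (u + v) m = basis.repr u m + basis.repr v m := by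
    intro u v m
    rw [basis.repr.map_add, Finsupp.add_apply]
  have hsub2 : ∀ (u v : B) (m : ℕ), basis.repr (u - v) m = basis.repr u m - basis.repr v m := by
    intro u v m
    rw [sub_eq_add_neg, hadd, sub_eq_add_neg]
    congr 1
    have : basis.repr (-v) = -(basis.repr v) := map_neg basis.repr v
    rw [this, Finsupp.neg_apply]
  have hsm : ∀ (a : A) (x : B) (m : ℕ), basis.repr (a • x) m = a * basis.repr x m := by
    intro a x m
    rw [basis.repr.map_smul, Finsupp.smul_apply, smul_eq_mul]
  -- shift of basis
  have hSb : ∀ i : ℕ, S * basis i = basis (i + 1) := by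
    intro i
    rw [hbasis, hbasis, pow_succ']
  -- coefficients of `S * f`
  have hSc : ∀ f : B,
      (∀ n : ℕ, basis.repr (S * f) (n + 1) = φ (basis.repr f n) + ψ (basis.repr f (n + 1)))
        ∧ basis.repr (S * f) 0 = ψ (basis.repr f 0) := by
    intro f
    have hf : f ∈ Submodule.span A (Set.range basis) := by
      rw [basis.span_eq]; trivial
    induction hf using Submodule.span_induction with
    | mem x hx =>
      obtain ⟨i, rfl⟩ := hx
      rw [hSb, basis.repr_self, basis.repr_self]
      constructor
      · intro n
        simp only [Finsupp.single_apply]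
        by_cases h1 : i = n
        · subst h1; simp [hψ1]
        · by_cases h2 : i = n + 1
          · subst h2; simp [hψ1]
          · simp [h1, h2]
      · simp only [Finsupp.single_apply]
        by_cases h0 : i = 0
        · subst h0; simp [hψ1]
        · simp [h0]
    | zero => simp
    | add x y hx hy ihx ihy =>
      constructor
      · intro n
        simp only [mul_add, map_add, Finsupp.add_apply, ihx.1 n, ihy.1 n]
        abel
      · simp only [mul_add, map_add, Finsupp.add_apply, ihx.2, ihy.2]
    | smul a x hx ihx =>
      have key : S * (a • x) = ι (φ a) * (S * x) + ι (ψ a) * x := by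
        rw [hsmul, ← mul_assoc, hS, add_mul, mul_assoc]
      constructor
      · intro n
        rw [key, hadd, hcs, hcs, ihx.1 n, hsm, hsm, hψ, map_mul, mul_add]
        abel
      · rw [key, hadd, hcs, hcs, ihx.2, hsm, hψ]
        abel
  -- coefficients of `S ^ k * f`
  have hpow : ∀ (k n : ℕ) (f : B), (∀ m, n + 1 ≤ m → basis.repr f m = 0) →
      (∀ m, n + k + 1 ≤ m → basis.repr (S ^ k * f) m = 0)
        ∧ basis.repr (S ^ k * f) (n + k) = (φ ^ k) (basis.repr f n) := by
    intro k
    induction k with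
    | zero =>
      intro n f hf
      simp only [pow_zero, one_mul, Nat.add_zero]
      exact ⟨hf, rfl⟩
    | succ k ih =>
      intro n f hf
      obtain ⟨ihd, ihc⟩ := ih n f hf
      have hrw : S ^ (k + 1) * f = S * (S ^ k * f) := by rw [pow_succ', mul_assoc]
      constructor
      · intro m hm
        obtain ⟨t, rfl⟩ : ∃ t, m = t + 1 := ⟨m - 1, by omega⟩
        rw [hrw, (hSc (S ^ k * f)).1 t, ihd t (by omega), ihd (t + 1) (by omega)]
        simp
      · have : n + (k + 1) = (n + k) + 1 := by omega
        rw [this, hrw, (hSc (S ^ k * f)).1 (n + k), ihc, ihd (n + k + 1) (by omega)]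
        simp only [map_zero, add_zero]
        rw [pow_succ' φ k]
        rfl
  rw [isNoetherianRing_iff, isNoetherian_def]
  intro I
  -- leading coefficient modules
  set L : ℕ → Submodule A A := fun n =>
    { carrier := { a | ∃ f, f ∈ I ∧ (∀ m, n + 1 ≤ m → basis.repr f m = 0) ∧ basis.repr f n = a }
      add_mem' := by
        rintro a b ⟨f, hfI, hfd, hfc⟩ ⟨g, hgI, hgd, hgc⟩
        exact ⟨f + g, I.add_mem hfI hgI,
          fun m hm => by rw [hadd, hfd m hm, hgd m hm, add_zero],
          by rw [hadd, hfc, hgc]⟩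
      zero_mem' := ⟨0, I.zero_mem, by simp, by simp⟩
      smul_mem' := by
        rintro r a ⟨f, hfI, hfd, hfc⟩
        refine ⟨ι r * f, ?_, fun m hm => by rw [hcs, hfd m hm, mul_zero],
          by rw [hcs, hfc, smul_eq_mul]⟩
        have := I.smul_mem (ι r) hfI
        rwa [smul_eq_mul] at this } with hL
  have hLmem : ∀ (n : ℕ) (a : A), a ∈ L n ↔
      ∃ f, f ∈ I ∧ (∀ m, n + 1 ≤ m → basis.repr f m = 0) ∧ basis.repr f n = a := by
    intro n a; rfl
  -- twisted chain
  set J : ℕ → Submodule A A := fun n =>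
    { carrier := { a | (φ ^ n) a ∈ L n }
      add_mem' := by
        intro a b ha hb
        simp only [Set.mem_setOf_eq, map_add] at *
        exact (L n).add_mem ha hb
      zero_mem' := by simp only [Set.mem_setOf_eq, map_zero]; exact (L n).zero_mem
      smul_mem' := by
        intro r a ha
        simp only [Set.mem_setOf_eq, smul_eq_mul, map_mul] at *
        have := (L n).smul_mem ((φ ^ n) r) ha
        rwa [smul_eq_mul] at this } with hJ
  have hJmono : Monotone J := by
    refine monotone_nat_of_le_succ ?_
    intro n a ha
    simp only [hJ, Set.mem_setOf_eq, Submodule.mem_mk, AddSubmonoid.mem_mk,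
      AddSubsemigroup.mem_mk] at *
    obtain ⟨f, hfI, hfd, hfc⟩ := ha
    have hSf : S * f ∈ I := by
      have := I.smul_mem S hfI; rwa [smul_eq_mul] at this
    refine ⟨S * f, hSf, ?_, ?_⟩
    · intro m hm
      obtain ⟨t, rfl⟩ : ∃ t, m = t + 1 := ⟨m - 1, by omega⟩
      rw [(hSc f).1 t, hfd t (by omega), hfd (t + 1) (by omega)]
      simp
    · rw [(hSc f).1 n, hfc, hfd (n + 1) (by omega), map_zero, add_zero, pow_succ' φ n]
      rfl
  obtain ⟨N, hN⟩ := monotone_stabilizes_iff_noetherian.mpr ‹IsNoetherianRing A›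
    ⟨J, hJmono⟩
  -- choose finite generating sets for each L n
  have hfg : ∀ n : ℕ, ∃ s : Finset A, Submodule.span A (↑s : Set A) = L n := fun n =>
    (IsNoetherian.noetherian (L n))
  choose s hs using hfg
  have hsub : ∀ n : ℕ, (↑(s n) : Set A) ⊆ L n := fun n =>
    (hs n) ▸ Submodule.subset_span
  -- choose witnesses
  have hwit : ∀ (n : ℕ) (a : A), a ∈ L n →
      ∃ f, f ∈ I ∧ (∀ m, n + 1 ≤ m → basis.repr f m = 0) ∧ basis.repr f n = a :=
    fun n a ha => (hLmem n a).mp ha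
  choose! w hwI hwd hwc using hwit
  set G : Finset B := (Finset.range (N + 1)).biUnion (fun n => (s n).image (w n)) with hG
  have hGI : ∀ g ∈ G, g ∈ I := by
    intro g hg
    simp only [hG, Finset.mem_biUnion, Finset.mem_range, Finset.mem_image] at hg
    obtain ⟨n, _, a, ha, rfl⟩ := hg
    exact hwI n a (hsub n ha)
  have hGle : Submodule.span B (↑G : Set B) ≤ I := Submodule.span_le.mpr hGI
  -- key lemma for n ≤ N
  have key0 : ∀ n : ℕ, n ≤ N → ∀ a ∈ L n, ∃ h : B, h ∈ Submodule.span B (↑G : Set B) ∧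
      (∀ m, n + 1 ≤ m → basis.repr h m = 0) ∧ basis.repr h n = a := by
    intro n hn a ha
    rw [← hs n] at ha
    induction ha using Submodule.span_induction with
    | mem x hx =>
      refine ⟨w n x, Submodule.subset_span ?_, hwd n x (hsub n hx), hwc n x (hsub n hx)⟩
      simp only [hG, Finset.coe_biUnion, Finset.coe_image, Set.mem_iUnion]
      exact ⟨n, by simp [Finset.mem_range]; omega, Set.mem_image_of_mem _ hx⟩
    | zero => exact ⟨0, Submodule.zero_mem _, by simp, by simp⟩
    | add x y hx hy ihx ihy =>
      obtain ⟨h1, h1s, h1d, h1c⟩ := ihx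
      obtain ⟨h2, h2s, h2d, h2c⟩ := ihy
      exact ⟨h1 + h2, Submodule.add_mem _ h1s h2s,
        fun m hm => by rw [hadd, h1d m hm, h2d m hm, add_zero],
        by rw [hadd, h1c, h2c]⟩
    | smul r x hx ihx =>
      obtain ⟨h, hsp, hd, hc⟩ := ihx
      refine ⟨ι r * h, ?_, fun m hm => by rw [hcs, hd m hm, mul_zero],
        by rw [hcs, hc, smul_eq_mul]⟩
      have := Submodule.smul_mem _ (ι r) hsp
      rwa [smul_eq_mul] at this
  -- key lemma for all n
  have key : ∀ n : ℕ, ∀ a ∈ L n, ∃ h : B, h ∈ Submodule.span B (↑G : Set B) ∧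
      (∀ m, n + 1 ≤ m → basis.repr h m = 0) ∧ basis.repr h n = a := by
    intro n a ha
    by_cases hn : n ≤ N
    · exact key0 n hn a ha
    · push_neg at hn
      set b := (φ ^ n).symm a with hb
      have hbJ : b ∈ J n := by
        simp only [hJ, Set.mem_setOf_eq, Submodule.mem_mk, AddSubmonoid.mem_mk,
          AddSubsemigroup.mem_mk, hb, RingEquiv.apply_symm_apply]
        exact ha
      have hbJN : b ∈ J N := by
        have heq : J N = J n := hN n hn.le
        rw [heq]
        exact hbJ
      have haN : (φ ^ N) b ∈ L N := hbJN
      obtain ⟨h', h's, h'd, h'c⟩ := key0 N le_rfl ((φ ^ N) b) haN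
      set d := n - N with hd
      refine ⟨S ^ d * h', ?_, ?_, ?_⟩
      · have := Submodule.smul_mem _ (S ^ d) h's
        rwa [smul_eq_mul] at this
      · intro m hm
        exact (hpow d N h' h'd).1 m (by omega)
      · have hcoef := (hpow d N h' h'd).2
        have hNd : N + d = n := by omega
        rw [hNd] at hcoef
        rw [hcoef, h'c]
        have : (φ ^ d) ((φ ^ N) b) = (φ ^ (d + N)) b := by
          rw [pow_add φ d N]; rfl
        rw [this]
        have hdn : d + N = n := by omega
        rw [hdn, hb, RingEquiv.apply_symm_apply]
  -- main induction on degree bound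
  have main : ∀ k : ℕ, ∀ f, f ∈ I → (∀ m, k ≤ m → basis.repr f m = 0) →
      f ∈ Submodule.span B (↑G : Set B) := by
    intro k
    induction k with
    | zero =>
      intro f _ h0
      have : f = 0 := by
        apply basis.repr.injective
        ext m
        simp [h0 m (Nat.zero_le m)]
      rw [this]
      exact Submodule.zero_mem _
    | succ n ih =>
      intro f hfI hfd
      have ha : basis.repr f n ∈ L n := ⟨f, hfI, fun m hm => hfd m hm, rfl⟩
      obtain ⟨h, hsp, hhd, hhc⟩ := key n _ ha
      have hfh : f - h ∈ I := I.sub_mem hfI (hGle hsp)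
      have hdlt : ∀ m, n ≤ m → basis.repr (f - h) m = 0 := by
        intro m hm
        rw [hsub2]
        rcases Nat.eq_or_lt_of_le hm with h1 | h1
        · rw [← h1, hhc]; exact sub_self _
        · rw [hfd m h1, hhd m h1, sub_zero]
      have : f - h ∈ Submodule.span B (↑G : Set B) := ih (f - h) hfh hdlt
      have hfeq : f = (f - h) + h := by abel
      rw [hfeq]
      exact Submodule.add_mem _ this hsp
  -- conclude
  refine ⟨G, le_antisymm hGle ?_⟩
  intro f hf
  set k := (basis.repr f).support.sup id + 1 with hk
  refine main k f hf ?_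
  intro m hm
  by_contra hc
  have hms : m ∈ (basis.repr f).support := Finsupp.mem_support_iff.mpr hc
  have := Finset.le_sup (f := id) hms
  simp only [id] at this
  omega
end

section
/- The formal power series s¹¹ does not belong to the image of the evaluation homomorphism ℂ[[X,Y]] → ℂ[[s]] sending X ↦ s³ and Y ↦ s⁷ + s⁸. Namely, s¹¹ ∉ ℂ[[s³, s⁷+s⁸]]. -/
open PowerSeries

lemma key_coeff (n a b : ℕ) :
    PowerSeries.coeff n ((X : PowerSeries ℂ) ^ (3*a) * (X ^ 7 + X ^ 8) ^ b) =
      if 3*a + 7*b ≤ n then (b.choose (n - (3*a + 7*b)) : ℂ) else 0 := by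
  have h1 : ((X : PowerSeries ℂ)) ^ (3*a) * (X ^ 7 + X ^ 8) ^ b
      = X ^ (3*a + 7*b) * ((1 + X) ^ b) := by
    rw [show (X:PowerSeries ℂ)^7 + X^8 = X^7 * (1+X) by ring, mul_pow, ← mul_assoc,
      ← pow_mul, ← pow_add]
  have h2 : ((1 : PowerSeries ℂ) + X) ^ b
      = (((1 + Polynomial.X : Polynomial ℂ) ^ b : Polynomial ℂ) : PowerSeries ℂ) := by
    push_cast
    simp
  rw [h1, coeff_X_pow_mul', h2, Polynomial.coeff_coe, Polynomial.coeff_one_add_X_pow]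

/-- `s¹¹ ∉ ℂ[[s³, s⁷+s⁸]]`: the power series `s¹¹` is not in the image of the (unique
continuous) evaluation `ℂ`-algebra homomorphism `ℂ[[X,Y]] → ℂ[[s]]`, `X ↦ s³`,
`Y ↦ s⁷+s⁸`.  Continuity is expressed by the condition that each coefficient of `φ F`
only depends on a suitable truncation of `F`. -/
theorem stmt_5 (φ : MvPowerSeries (Fin 2) ℂ →ₐ[ℂ] PowerSeries ℂ)
    (hX : φ (MvPowerSeries.X 0) = X ^ 3)
    (hY : φ (MvPowerSeries.X 1) = X ^ 7 + X ^ 8)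
    (hcont : ∀ (F : MvPowerSeries (Fin 2) ℂ) (n : ℕ),
      PowerSeries.coeff n (φ F) =
        PowerSeries.coeff n (φ
          ((MvPowerSeries.trunc ℂ (Finsupp.single 0 (n + 1) + Finsupp.single 1 (n + 1)) F :
            MvPolynomial (Fin 2) ℂ) : MvPowerSeries (Fin 2) ℂ))) :
    (X : PowerSeries ℂ) ^ 11 ∉ Set.range φ := by
  rintro ⟨F, hF⟩
  -- φ on polynomials is aeval
  have hpoly : ∀ p : MvPolynomial (Fin 2) ℂ,
      φ (p : MvPowerSeries (Fin 2) ℂ) =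
        MvPolynomial.aeval ![X ^ 3, X ^ 7 + X ^ 8] p := by
    intro p
    have : φ.comp (MvPolynomial.coeToMvPowerSeries.algHom ℂ)
        = MvPolynomial.aeval ![X ^ 3, X ^ 7 + X ^ 8] := by
      apply MvPolynomial.algHom_ext
      intro i
      fin_cases i <;>
        simp [MvPolynomial.coeToMvPowerSeries.algHom_apply, hX, hY]
    have := DFunLike.congr_fun this p
    simpa [MvPolynomial.coeToMvPowerSeries.algHom_apply] using this
  -- main coefficient computation
  have main : ∀ n : ℕ, (n = 10 ∨ n = 11) →
      PowerSeries.coeff n (φ F)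
        = MvPowerSeries.coeff (Finsupp.single 0 1 + Finsupp.single 1 1) F := by
    intro n hn
    rw [hcont F n, hpoly]
    set p := (MvPowerSeries.trunc ℂ (Finsupp.single 0 (n + 1) + Finsupp.single 1 (n + 1)) F :
      MvPolynomial (Fin 2) ℂ) with hp
    rw [MvPolynomial.aeval_def, MvPolynomial.eval₂_eq']
    rw [map_sum]
    have hterm : ∀ m : Fin 2 →₀ ℕ,
        PowerSeries.coeff n
            (algebraMap ℂ (PowerSeries ℂ) (MvPolynomial.coeff m p) *
              ∏ i, (![X ^ 3, X ^ 7 + X ^ 8] : Fin 2 → PowerSeries ℂ) i ^ m i)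
          = MvPolynomial.coeff m p *
              (if 3 * m 0 + 7 * m 1 ≤ n then ((m 1).choose (n - (3 * m 0 + 7 * m 1)) : ℂ)
               else 0) := by
      intro m
      rw [Fin.prod_univ_two]
      simp only [Matrix.cons_val_zero, Matrix.cons_val_one, Matrix.head_cons]
      rw [← pow_mul, ← Algebra.smul_def, map_smul, smul_eq_mul, key_coeff]
    rw [Finset.sum_congr rfl fun m _ => hterm m]
    set t : Fin 2 →₀ ℕ := Finsupp.single 0 1 + Finsupp.single 1 1 with ht
    have ht0 : t 0 = 1 := by simp [ht, Finsupp.single_apply]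
    have ht1 : t 1 = 1 := by simp [ht, Finsupp.single_apply]
    rw [Finset.sum_eq_single t ?h0 ?h1]
    case h0 =>
      intro m _ hm
      have hne : ¬(m 0 = 1 ∧ m 1 = 1) := by
        rintro ⟨h0, h1⟩
        exact hm (by ext i; fin_cases i <;> simp [h0, h1, ht0, ht1, ht, Finsupp.single_apply])
      by_cases h : 3 * m 0 + 7 * m 1 ≤ n
      · have hlt' : m 1 < n - (3 * m 0 + 7 * m 1) := by
          have hb : m 1 ≤ 1 := by omega
          have ha : m 0 ≤ 3 := by omega
          interval_cases h0 : (m 0) <;> interval_cases h1 : (m 1) <;> omega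
        rw [if_pos h, Nat.choose_eq_zero_of_lt hlt', Nat.cast_zero, mul_zero]
      · rw [if_neg h, mul_zero]
    case h1 =>
      intro ht'
      rw [MvPolynomial.notMem_support_iff.mp ht', zero_mul]
    have hlt : t < Finsupp.single 0 (n + 1) + Finsupp.single 1 (n + 1) := by
      apply lt_of_le_of_ne
      · rw [Finsupp.le_def]
        intro i
        fin_cases i <;> simp [ht, Finsupp.single_apply] <;> omega
      · intro h
        have := DFunLike.congr_fun h (0 : Fin 2)
        simp [ht, Finsupp.single_apply] at this
        omega
    have hcoe : MvPolynomial.coeff t p = MvPowerSeries.coeff t F := by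
      rw [hp, MvPowerSeries.coeff_trunc, if_pos hlt]
    rw [hcoe, ht0, ht1]
    rcases hn with rfl | rfl <;> norm_num
  have h10 := main 10 (Or.inl rfl)
  have h11 := main 11 (Or.inr rfl)
  rw [hF] at h10 h11
  rw [PowerSeries.coeff_X_pow] at h10 h11
  norm_num at h10 h11
  rw [← h11] at h10
  exact one_ne_zero h10.symm
end

section
/- Every ℂ-linear derivation of the first Weyl algebra A₁(ℂ) = ℂ⟨x, ∂⟩/(∂x − x∂ − 1) is inner, i.e. of the form a ↦ [d, a] for some d ∈ A₁(ℂ). -/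
/-- The defining relation of the first Weyl algebra: `∂x = x∂ + 1`
(generator `0` is `x`, generator `1` is `∂`). -/
inductive WeylRel : FreeAlgebra ℂ (Fin 2) → FreeAlgebra ℂ (Fin 2) → Prop
  | comm : WeylRel (FreeAlgebra.ι ℂ 1 * FreeAlgebra.ι ℂ 0)
      (FreeAlgebra.ι ℂ 0 * FreeAlgebra.ι ℂ 1 + 1)

/-- The first Weyl algebra `A₁(ℂ) = ℂ⟨x, ∂⟩/(∂x − x∂ − 1)`. -/
noncomputable abbrev WeylAlgebra : Type := RingQuot WeylRel

noncomputable section AuxWeyl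

open Polynomial

/-- image of x -/
noncomputable def Wx : WeylAlgebra := RingQuot.mkAlgHom ℂ WeylRel (FreeAlgebra.ι ℂ 0)
/-- image of ∂ -/
noncomputable def Wy : WeylAlgebra := RingQuot.mkAlgHom ℂ WeylRel (FreeAlgebra.ι ℂ 1)

lemma Wrel : Wy * Wx = Wx * Wy + 1 := by
  have h := RingQuot.mkAlgHom_rel ℂ WeylRel.comm
  simpa [Wx, Wy, map_mul, map_add, map_one] using h

lemma Wy_mul_Wx_pow_succ (n : ℕ) :
    Wy * Wx ^ (n + 1) = Wx ^ (n + 1) * Wy + ((n : ℂ) + 1) • Wx ^ n := by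
  induction n with
  | zero => simpa using Wrel
  | succ n ih =>
    have : Wy * Wx ^ (n + 2) = (Wy * Wx ^ (n + 1)) * Wx := by
      rw [pow_succ, mul_assoc]
    rw [this, ih, add_mul, smul_mul_assoc, mul_assoc, Wrel, mul_add, mul_one,
      ← mul_assoc, ← pow_succ, ← pow_succ]
    push_cast
    module

lemma Wy_mul_Wx_pow (n : ℕ) : Wy * Wx ^ n = Wx ^ n * Wy + (n : ℂ) • Wx ^ (n - 1) := by
  cases n with
  | zero => simp
  | succ n => simpa using Wy_mul_Wx_pow_succ n

lemma Wy_pow_succ_mul_Wx (n : ℕ) :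
    Wy ^ (n + 1) * Wx = Wx * Wy ^ (n + 1) + ((n : ℂ) + 1) • Wy ^ n := by
  induction n with
  | zero => simpa using Wrel
  | succ n ih =>
    have : Wy ^ (n + 2) * Wx = Wy * (Wy ^ (n + 1) * Wx) := by
      rw [pow_succ', mul_assoc]
    rw [this, ih, mul_add, ← mul_assoc, Wrel, mul_smul_comm, add_mul, one_mul,
      mul_assoc, ← pow_succ']
    simp only [← pow_succ']
    push_cast
    module

lemma Wy_pow_mul_Wx (n : ℕ) : Wy ^ n * Wx = Wx * Wy ^ n + (n : ℂ) • Wy ^ (n - 1) := by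
  cases n with
  | zero => simp
  | succ n => simpa using Wy_pow_succ_mul_Wx n

/-- monomials -/
noncomputable def Wmono (p : ℕ × ℕ) : WeylAlgebra := Wx ^ p.1 * Wy ^ p.2

lemma Wx_mul_Wmono (i j : ℕ) : Wx * Wmono (i, j) = Wmono (i + 1, j) := by
  simp only [Wmono]
  rw [← mul_assoc, ← pow_succ']

lemma Wy_mul_Wmono (i j : ℕ) :
    Wy * Wmono (i, j) = Wmono (i, j + 1) + (i : ℂ) • Wmono (i - 1, j) := by
  simp only [Wmono]
  rw [← mul_assoc, Wy_mul_Wx_pow, add_mul, smul_mul_assoc, mul_assoc, ← pow_succ']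

lemma span_Wmono : Submodule.span ℂ (Set.range Wmono) = ⊤ := by
  set M := Submodule.span ℂ (Set.range Wmono) with hM
  have hmem : ∀ p : ℕ × ℕ, Wmono p ∈ M := fun p =>
    Submodule.subset_span (Set.mem_range_self p)
  have h1 : (1 : WeylAlgebra) ∈ M := by
    have := hmem (0, 0)
    simpa [Wmono] using this
  have hX : ∀ m ∈ M, Wx * m ∈ M := by
    have hle : M ≤ M.comap (LinearMap.mulLeft ℂ Wx) := by
      rw [hM, Submodule.span_le]
      rintro _ ⟨⟨i, j⟩, rfl⟩
      simp only [Set.mem_setOf_eq, SetLike.mem_coe, Submodule.mem_comap,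
        LinearMap.mulLeft_apply]
      rw [Wx_mul_Wmono]
      exact hmem _
    exact fun m hm => hle hm
  have hY : ∀ m ∈ M, Wy * m ∈ M := by
    have hle : M ≤ M.comap (LinearMap.mulLeft ℂ Wy) := by
      rw [hM, Submodule.span_le]
      rintro _ ⟨⟨i, j⟩, rfl⟩
      simp only [Set.mem_setOf_eq, SetLike.mem_coe, Submodule.mem_comap,
        LinearMap.mulLeft_apply]
      rw [Wy_mul_Wmono]
      exact add_mem (hmem _) (Submodule.smul_mem _ _ (hmem _))
    exact fun m hm => hle hm
  have key : ∀ a : WeylAlgebra, ∀ m ∈ M, a * m ∈ M := by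
    intro a
    obtain ⟨b, rfl⟩ := RingQuot.mkAlgHom_surjective ℂ WeylRel a
    induction b with
    | grade0 r =>
      intro m hm
      rw [AlgHom.commutes, ← Algebra.smul_def]
      exact M.smul_mem r hm
    | grade1 i =>
      intro m hm
      fin_cases i
      · exact hX m hm
      · exact hY m hm
    | mul a b ha hb =>
      intro m hm
      rw [map_mul, mul_assoc]
      exact ha _ (hb m hm)
    | add a b ha hb =>
      intro m hm
      rw [map_add, add_mul]
      exact add_mem (ha m hm) (hb m hm)
  rw [eq_top_iff]
  intro a _
  simpa using key a 1 h1


/-! ### The polynomial representation -/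

/-- The representation of the free algebra on `ℂ[X]`:
`x` acts by multiplication by `X`, `∂` acts by `d/dX`. -/
noncomputable def repAux : FreeAlgebra ℂ (Fin 2) →ₐ[ℂ] Module.End ℂ (Polynomial ℂ) :=
  FreeAlgebra.lift ℂ
    ![LinearMap.mulLeft ℂ (Polynomial.X : Polynomial ℂ),
      (Polynomial.derivative : Polynomial ℂ →ₗ[ℂ] Polynomial ℂ)]

lemma repAux_rel :
    repAux (FreeAlgebra.ι ℂ 1 * FreeAlgebra.ι ℂ 0)
      = repAux (FreeAlgebra.ι ℂ 0 * FreeAlgebra.ι ℂ 1 + 1) := by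
  simp only [repAux, map_mul, map_add, map_one, FreeAlgebra.lift_ι_apply]
  refine LinearMap.ext fun q => ?_
  simp only [Module.End.mul_apply, LinearMap.add_apply, Module.End.one_apply,
    Matrix.cons_val_zero, Matrix.cons_val_one, Matrix.head_cons,
    LinearMap.mulLeft_apply]
  simp [Polynomial.derivative_mul, add_comm]

/-- The representation of the Weyl algebra on `ℂ[X]`. -/
noncomputable def rep : WeylAlgebra →ₐ[ℂ] Module.End ℂ (Polynomial ℂ) :=
  RingQuot.liftAlgHom ℂ ⟨repAux, by rintro _ _ ⟨⟩; exact repAux_rel⟩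

lemma rep_Wx : rep Wx = LinearMap.mulLeft ℂ (Polynomial.X : Polynomial ℂ) := by
  simp [rep, Wx, RingQuot.liftAlgHom_mkAlgHom_apply, repAux, FreeAlgebra.lift_ι_apply]

lemma rep_Wy :
    rep Wy = (Polynomial.derivative : Polynomial ℂ →ₗ[ℂ] Polynomial ℂ) := by
  simp [rep, Wy, RingQuot.liftAlgHom_mkAlgHom_apply, repAux, FreeAlgebra.lift_ι_apply]

lemma rep_Wmono_apply (i j : ℕ) (q : Polynomial ℂ) :
    rep (Wmono (i, j)) q = Polynomial.X ^ i * (Polynomial.derivative^[j] q) := by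
  rw [Wmono, map_mul, map_pow, map_pow, rep_Wx, rep_Wy, LinearMap.pow_mulLeft]
  rw [Module.End.mul_apply, LinearMap.mulLeft_apply, Module.End.pow_apply]

lemma rep_coeffs_zero (c : (ℕ × ℕ) →₀ ℂ)
    (h : (c.sum fun p r => r • rep (Wmono p)) = 0) : c = 0 := by
  by_contra hc
  have hsupp : c.support.Nonempty := Finsupp.support_nonempty_iff.mpr hc
  set J : Finset ℕ := c.support.image Prod.snd with hJ
  have hJne : J.Nonempty := hsupp.image _
  set m : ℕ := J.min' hJne with hm
  obtain ⟨p0, hp0, hp02⟩ := Finset.mem_image.mp (J.min'_mem hJne)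
  have hmin : ∀ p ∈ c.support, m ≤ p.2 := fun p hp =>
    J.min'_le _ (Finset.mem_image_of_mem _ hp)
  have happ := DFunLike.congr_fun h ((Polynomial.X : Polynomial ℂ) ^ m)
  rw [Finsupp.sum] at happ
  simp only [LinearMap.zero_apply, LinearMap.coe_sum, Finset.sum_apply,
    LinearMap.smul_apply] at happ
  have hterm : ∀ p ∈ c.support,
      (rep (Wmono p)) ((Polynomial.X : Polynomial ℂ) ^ m)
        = ((m.descFactorial p.2 : ℂ)) •
            (Polynomial.X : Polynomial ℂ) ^ (p.1 + (m - p.2)) := by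
    rintro ⟨i, j⟩ _
    rw [rep_Wmono_apply, Polynomial.iterate_derivative_X_pow_eq_smul]
    rw [mul_smul_comm, ← pow_add]
  rw [Finset.sum_congr rfl (fun p hp => by rw [hterm p hp])] at happ
  have hcoeff := congrArg (fun q : Polynomial ℂ => q.coeff p0.1) happ
  simp only [Polynomial.finset_sum_coeff, Polynomial.coeff_smul,
    Polynomial.coeff_X_pow, Polynomial.coeff_zero, smul_eq_mul] at hcoeff
  rw [Finset.sum_eq_single p0] at hcoeff
  · have h1 : p0.1 = p0.1 + (m - p0.2) := by rw [hp02]; simp [hm]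
    rw [if_pos h1, hp02, Nat.descFactorial_self] at hcoeff
    have : c p0 = 0 := by
      have hfac : ((m.factorial : ℂ)) ≠ 0 := by
        exact_mod_cast Nat.cast_ne_zero.mpr m.factorial_ne_zero
      simp only [mul_one] at hcoeff
      exact (mul_eq_zero.mp hcoeff).resolve_right hfac
    exact (Finsupp.mem_support_iff.mp hp0) this
  · rintro p hp hne
    rcases lt_or_eq_of_le (hmin p hp) with hlt | heq
    · rw [Nat.descFactorial_eq_zero_iff_lt.mpr hlt]
      simp
    · have h1 : ¬ (p0.1 = p.1 + (m - p.2)) := by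
        rw [← heq, Nat.sub_self, Nat.add_zero]
        intro h1
        apply hne
        ext
        · exact h1.symm
        · rw [← heq, hp02]
      rw [if_neg h1, mul_zero, mul_zero]
  · intro hnot
    exact absurd hp0 hnot

lemma rep_injective : Function.Injective (rep : WeylAlgebra →ₐ[ℂ] _) := by
  rw [injective_iff_map_eq_zero (rep : WeylAlgebra →ₐ[ℂ] Module.End ℂ (Polynomial ℂ))]
  intro a ha
  have hmem : a ∈ Submodule.span ℂ (Set.range Wmono) := by
    rw [span_Wmono]; trivial
  obtain ⟨c, rfl⟩ := Finsupp.mem_span_range_iff_exists_finsupp.mp hmem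
  rw [map_finsuppSum] at ha
  simp only [map_smul] at ha
  have : c = 0 := rep_coeffs_zero c ha
  simp [this]


/-! ### Centralizer of `x`, brackets with polynomials in `x` -/

lemma rep_aeval_apply (g : Polynomial ℂ) (q : Polynomial ℂ) :
    rep (Polynomial.aeval Wx g) q = g * q := by
  induction g using Polynomial.induction_on' with
  | add p₁ p₂ h₁ h₂ =>
    rw [map_add, map_add, LinearMap.add_apply, h₁, h₂, add_mul]
  | monomial n t =>
    rw [← Polynomial.smul_X_eq_monomial, map_smul, map_pow, Polynomial.aeval_X,
      map_smul, map_pow, rep_Wx,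
      LinearMap.smul_apply, LinearMap.pow_mulLeft, LinearMap.mulLeft_apply,
      smul_mul_assoc]

lemma comm_Wx (a : WeylAlgebra) (h : a * Wx = Wx * a) :
    ∃ g : Polynomial ℂ, a = Polynomial.aeval Wx g := by
  have hcomm : ∀ q, rep a (Polynomial.X * q) = Polynomial.X * rep a q := by
    intro q
    have h2 : rep a * rep Wx = rep Wx * rep a := by
      rw [← map_mul, ← map_mul, h]
    have h3 := DFunLike.congr_fun h2 q
    simpa [rep_Wx, Module.End.mul_apply, LinearMap.mulLeft_apply] using h3
  have hpow : ∀ n, rep a (Polynomial.X ^ n) = Polynomial.X ^ n * rep a 1 := by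
    intro n
    induction n with
    | zero => simp
    | succ n ih => rw [pow_succ', hcomm, ih, ← mul_assoc, ← pow_succ']
  have hq : ∀ q : Polynomial ℂ, rep a q = q * rep a 1 := by
    intro q
    induction q using Polynomial.induction_on' with
    | add p₁ p₂ h₁ h₂ => rw [map_add, h₁, h₂, add_mul]
    | monomial n t =>
      rw [← Polynomial.smul_X_eq_monomial, map_smul, hpow, smul_mul_assoc]
  refine ⟨rep a 1, rep_injective ?_⟩
  refine LinearMap.ext fun q => ?_
  rw [hq q, rep_aeval_apply, mul_comm]

lemma aeval_Wx_comm (g : Polynomial ℂ) :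
    Polynomial.aeval Wx g * Wx = Wx * Polynomial.aeval Wx g := by
  induction g using Polynomial.induction_on' with
  | add p₁ p₂ h₁ h₂ => rw [map_add, add_mul, mul_add, h₁, h₂]
  | monomial n t =>
    rw [← Polynomial.smul_X_eq_monomial, map_smul, map_pow, Polynomial.aeval_X,
      smul_mul_assoc, mul_smul_comm, ← pow_succ, ← pow_succ']

lemma Wy_mul_aeval (g : Polynomial ℂ) :
    Wy * Polynomial.aeval Wx g
      = Polynomial.aeval Wx g * Wy + Polynomial.aeval Wx (Polynomial.derivative g) := by
  induction g using Polynomial.induction_on' with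
  | add p₁ p₂ h₁ h₂ =>
    rw [map_add, map_add, mul_add, h₁, h₂, map_add, add_mul]
    abel
  | monomial n t =>
    rw [← Polynomial.smul_X_eq_monomial, Polynomial.derivative_smul, map_smul, map_smul,
      Polynomial.derivative_X_pow, map_pow, Polynomial.aeval_X, mul_smul_comm,
      Wy_mul_Wx_pow, smul_add, smul_mul_assoc]
    congr 1
    rw [map_mul, Polynomial.aeval_C, map_pow, Polynomial.aeval_X, ← Algebra.smul_def]

lemma exists_antideriv (g : Polynomial ℂ) :
    ∃ h : Polynomial ℂ, Polynomial.derivative h = g := by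
  induction g using Polynomial.induction_on' with
  | add p₁ p₂ h₁ h₂ =>
    obtain ⟨q₁, rfl⟩ := h₁
    obtain ⟨q₂, rfl⟩ := h₂
    exact ⟨q₁ + q₂, by rw [map_add]⟩
  | monomial n t =>
    refine ⟨Polynomial.monomial (n + 1) (t / (n + 1)), ?_⟩
    rw [Polynomial.derivative_monomial]
    have hne : ((n : ℂ) + 1) ≠ 0 := Nat.cast_add_one_ne_zero n
    simp only [Nat.add_sub_cancel]
    push_cast
    rw [div_mul_cancel₀ t hne]

lemma adWx_surj (p : WeylAlgebra) : ∃ b : WeylAlgebra, b * Wx - Wx * b = p := by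
  set L : WeylAlgebra →ₗ[ℂ] WeylAlgebra :=
    LinearMap.mulRight ℂ Wx - LinearMap.mulLeft ℂ Wx with hL
  suffices h : LinearMap.range L = ⊤ by
    obtain ⟨b, hb⟩ := h ▸ Submodule.mem_top (x := p)
    exact ⟨b, hb⟩
  rw [← top_le_iff, ← span_Wmono, Submodule.span_le]
  rintro _ ⟨⟨i, j⟩, rfl⟩
  have hne : ((j : ℂ) + 1) ≠ 0 := Nat.cast_add_one_ne_zero j
  refine ⟨((j : ℂ) + 1)⁻¹ • Wmono (i, j + 1), ?_⟩
  have hbr : L (Wmono (i, j + 1)) = ((j : ℂ) + 1) • Wmono (i, j) := by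
    simp only [hL, LinearMap.sub_apply, LinearMap.mulRight_apply, LinearMap.mulLeft_apply,
      Wmono]
    rw [mul_assoc, Wy_pow_succ_mul_Wx, mul_add, ← mul_assoc, ← pow_succ,
      mul_smul_comm, ← mul_assoc, ← pow_succ']
    abel
  rw [map_smul, hbr, smul_smul, inv_mul_cancel₀ hne, one_smul]

lemma weyl_deriv_zero (E : WeylAlgebra →ₗ[ℂ] WeylAlgebra)
    (hE : ∀ a b, E (a * b) = E a * b + a * E b)
    (hX : E Wx = 0) (hY : E Wy = 0) : ∀ a, E a = 0 := by
  have h1 : E 1 = 0 := by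
    have h2 := hE 1 1
    simp only [one_mul, mul_one] at h2
    exact (left_eq_add.mp h2)
  have hXp : ∀ n, E (Wx ^ n) = 0 := by
    intro n
    induction n with
    | zero => simpa using h1
    | succ n ih => rw [pow_succ, hE, ih, hX, zero_mul, mul_zero, add_zero]
  have hYp : ∀ n, E (Wy ^ n) = 0 := by
    intro n
    induction n with
    | zero => simpa using h1
    | succ n ih => rw [pow_succ, hE, ih, hY, zero_mul, mul_zero, add_zero]
  have hm : ∀ p : ℕ × ℕ, E (Wmono p) = 0 := by
    rintro ⟨i, j⟩
    rw [Wmono, hE, hXp, hYp, zero_mul, mul_zero, add_zero]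
  intro a
  have hle : Submodule.span ℂ (Set.range Wmono) ≤ LinearMap.ker E := by
    rw [Submodule.span_le]
    rintro _ ⟨p, rfl⟩
    exact LinearMap.mem_ker.mpr (hm p)
  have : a ∈ LinearMap.ker E := hle (by rw [span_Wmono]; trivial)
  exact LinearMap.mem_ker.mp this

end AuxWeyl

/-- Every `ℂ`-linear derivation of the first Weyl algebra is inner. -/
theorem stmt_6 (D : WeylAlgebra →ₗ[ℂ] WeylAlgebra)
    (hD : ∀ a b : WeylAlgebra, D (a * b) = D a * b + a * D b) :
    ∃ d : WeylAlgebra, ∀ a : WeylAlgebra, D a = d * a - a * d := by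
  classical
  have hD1 : D 1 = 0 := by
    have h2 := hD 1 1
    simp only [one_mul, mul_one] at h2
    exact left_eq_add.mp h2
  obtain ⟨d₀, hd₀⟩ := adWx_surj (D Wx)
  set q : WeylAlgebra := D Wy - (d₀ * Wy - Wy * d₀) with hq
  have key : D Wy * Wx + Wy * D Wx = D Wx * Wy + Wx * D Wy := by
    have h1 : D (Wy * Wx) = D (Wx * Wy + 1) := by rw [Wrel]
    rw [hD, map_add, hD, hD1, add_zero] at h1
    exact h1
  have hqX : q * Wx = Wx * q := by
    have main : q * Wx - Wx * q =
        ((D Wy * Wx + Wy * (d₀ * Wx - Wx * d₀)) - ((d₀ * Wx - Wx * d₀) * Wy + Wx * D Wy))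
          - d₀ * (Wy * Wx - (Wx * Wy + 1)) + (Wy * Wx - (Wx * Wy + 1)) * d₀ := by
      rw [hq]
      simp only [sub_mul, mul_sub, add_mul, mul_add, mul_assoc, mul_one, one_mul]
      abel
    rw [hd₀] at main
    have z1 : D Wy * Wx + Wy * D Wx - (D Wx * Wy + Wx * D Wy) = 0 := sub_eq_zero.mpr key
    have z2 : Wy * Wx - (Wx * Wy + 1) = 0 := sub_eq_zero.mpr Wrel
    rw [z1, z2, mul_zero, zero_mul, sub_zero, add_zero] at main
    exact sub_eq_zero.mp main
  obtain ⟨g, hg⟩ := comm_Wx q hqX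
  obtain ⟨hp, hhd⟩ := exists_antideriv (-g)
  have hrX : Polynomial.aeval Wx hp * Wx = Wx * Polynomial.aeval Wx hp :=
    aeval_Wx_comm hp
  have hrY : Polynomial.aeval Wx hp * Wy - Wy * Polynomial.aeval Wx hp = q := by
    rw [Wy_mul_aeval hp, hhd, map_neg, ← hg]
    abel
  refine ⟨d₀ + Polynomial.aeval Wx hp, ?_⟩
  set d : WeylAlgebra := d₀ + Polynomial.aeval Wx hp with hd
  have hdX : d * Wx - Wx * d = D Wx := by
    have h2 : d * Wx - Wx * d = (d₀ * Wx - Wx * d₀) + (Polynomial.aeval Wx hp * Wx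
        - Wx * Polynomial.aeval Wx hp) := by
      rw [hd]
      simp only [add_mul, mul_add]
      abel
    rw [h2, hd₀, hrX, sub_self, add_zero]
  have hdY : d * Wy - Wy * d = D Wy := by
    have h2 : d * Wy - Wy * d = (d₀ * Wy - Wy * d₀) + (Polynomial.aeval Wx hp * Wy
        - Wy * Polynomial.aeval Wx hp) := by
      rw [hd]
      simp only [add_mul, mul_add]
      abel
    rw [h2, hrY, hq]
    abel
  set E : WeylAlgebra →ₗ[ℂ] WeylAlgebra :=
    D - (LinearMap.mulLeft ℂ d - LinearMap.mulRight ℂ d) with hE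
  have hEexp : ∀ a, E a = D a - (d * a - a * d) := fun a => by
    simp [hE, LinearMap.sub_apply, LinearMap.mulLeft_apply, LinearMap.mulRight_apply]
  have hELeib : ∀ a b, E (a * b) = E a * b + a * E b := by
    intro a b
    simp only [hEexp]
    rw [hD]
    simp only [sub_mul, mul_sub, add_mul, mul_add, mul_assoc]
    abel
  have hEX : E Wx = 0 := by rw [hEexp, hdX, sub_self]
  have hEY : E Wy = 0 := by rw [hEexp, hdY, sub_self]
  intro a
  have h3 := weyl_deriv_zero E hELeib hEX hEY a
  rw [hEexp] at h3
  have := sub_eq_zero.mp h3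
  rw [this]
end

section
/- Let (R_i)_{i∈I} be a directed system of rings indexed by a directed set I, such that each R_i is left Noetherian and each transition map R_i → R_j (for i ≤ j) makes R_j flat as a right R_i-module. Then the colimit ring R = colim_i R_i is left coherent, i.e. every finitely generated left ideal of R is finitely presented. -/
/-- A directed colimit of left Noetherian rings along right-flat transition maps is
left coherent.  The colimit is encoded by a ring `R` together with compatible maps
`g i : G i →+* R` that are jointly surjective and whose kernels are eventually
realized in the system.  Flatness of `G j` as a right `G i`-module (via `f i j`) is
expressed by the equational criterion for flatness.  The conclusion is that every
finitely generated left ideal of `R` is finitely presented. -/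
theorem stmt_14 {ι : Type*} [Preorder ι] [IsDirected ι (· ≤ ·)] [Nonempty ι]
    (G : ι → Type*) [∀ i, Ring (G i)] [∀ i, IsNoetherianRing (G i)]
    (f : ∀ i j, i ≤ j → G i →+* G j)
    (hf_id : ∀ i (a : G i), f i i le_rfl a = a)
    (hf_comp : ∀ i j k (hij : i ≤ j) (hjk : j ≤ k) (a : G i),
      f j k hjk (f i j hij a) = f i k (hij.trans hjk) a)
    (hflat : ∀ i j (hij : i ≤ j) (n : ℕ) (x : Fin n → G j) (a : Fin n → G i),
      (∑ t, x t * f i j hij (a t)) = 0 →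
      ∃ (m : ℕ) (y : Fin m → G j) (c : Fin m → Fin n → G i),
        (∀ t, x t = ∑ s, y s * f i j hij (c s t)) ∧ ∀ s, (∑ t, c s t * a t) = 0)
    (R : Type*) [Ring R] (g : ∀ i, G i →+* R)
    (hg : ∀ i j (hij : i ≤ j) (a : G i), g j (f i j hij a) = g i a)
    (hsurj : ∀ x : R, ∃ i, ∃ a : G i, g i a = x)
    (hker : ∀ i (a : G i), g i a = 0 → ∃ j, ∃ hij : i ≤ j, f i j hij a = 0) :
    ∀ I : Ideal R, I.FG → Module.FinitePresentation R I := by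
  classical
  intro I hI
  obtain ⟨n, x, hx⟩ := Submodule.fg_iff_exists_fin_generating_family.mp hI
  have hxI : ∀ t, x t ∈ I := fun t => hx ▸ Submodule.subset_span ⟨t, rfl⟩
  set l₀ : (Fin n → R) →ₗ[R] R := Fintype.linearCombination R x with hl₀
  have hl₀mem : ∀ v : Fin n → R, l₀ v ∈ I := by
    intro v
    rw [Fintype.linearCombination_apply]
    exact I.sum_mem fun t _ => I.smul_mem _ (hxI t)
  set l : (Fin n → R) →ₗ[R] I := l₀.codRestrict (I : Submodule R R) hl₀mem with hl
  have hlsurj : Function.Surjective l := by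
    rintro ⟨y, hy⟩
    rw [← hx] at hy
    obtain ⟨v, hv⟩ := (Submodule.mem_span_range_iff_exists_fun R).mp hy
    exact ⟨v, Subtype.ext (by simpa [l, l₀, Fintype.linearCombination_apply] using hv)⟩
  apply Module.finitePresentation_of_surjective l hlsurj
  rw [hl, LinearMap.ker_codRestrict]
  -- lift the generators to a common level i0
  choose ix ax hax using fun t => hsurj (x t)
  obtain ⟨i0, hi0⟩ := Finite.exists_le ix
  set b : Fin n → G i0 := fun t => f (ix t) i0 (hi0 t) (ax t) with hbdef
  have hb : ∀ t, g i0 (b t) = x t := fun t => (hg _ _ _ _).trans (hax t)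
  -- relations at level i0
  set L : (Fin n → G i0) →ₗ[G i0] G i0 := Fintype.linearCombination (G i0) b with hLdef
  obtain ⟨m, c, hc⟩ := Submodule.fg_iff_exists_fin_generating_family.mp
    (IsNoetherian.noetherian (LinearMap.ker L))
  set φ : (Fin n → G i0) → (Fin n → R) := fun v t => g i0 (v t) with hφdef
  have hφspan : ∀ v ∈ LinearMap.ker L, φ v ∈ Submodule.span R (Set.range fun s => φ (c s)) := by
    intro v hv
    rw [← hc] at hv
    induction hv using Submodule.span_induction with
    | mem w hw =>
      obtain ⟨s, rfl⟩ := hw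
      exact Submodule.subset_span ⟨s, rfl⟩
    | zero =>
      have : φ 0 = 0 := funext fun t => map_zero _
      rw [this]; exact Submodule.zero_mem _
    | add u w _ _ hu hw =>
      have : φ (u + w) = φ u + φ w := funext fun t => map_add _ _ _
      rw [this]; exact Submodule.add_mem _ hu hw
    | smul a u _ hu =>
      have : φ (a • u) = g i0 a • φ u := funext fun t => map_mul _ _ _
      rw [this]; exact Submodule.smul_mem _ _ hu
  have key : LinearMap.ker l₀ = Submodule.span R (Set.range fun s => φ (c s)) := by
    apply le_antisymm
    · intro r hr
      have hr0 : (∑ t, r t * x t) = 0 := by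
        simpa [l₀, Fintype.linearCombination_apply, smul_eq_mul] using hr
      -- lift r to a common level j ≥ i0
      choose jx yx hyx using fun t => hsurj (r t)
      obtain ⟨j1, hj1⟩ := Finite.exists_le jx
      obtain ⟨j, hij, hj1j⟩ := exists_ge_ge i0 j1
      set y : Fin n → G j := fun t => f (jx t) j ((hj1 t).trans hj1j) (yx t) with hydef
      have hy : ∀ t, g j (y t) = r t := fun t => (hg _ _ _ _).trans (hyx t)
      have h0 : g j (∑ t, y t * f i0 j hij (b t)) = 0 := by
        rw [map_sum]
        rw [show (∑ t, g j (y t * f i0 j hij (b t))) = ∑ t, r t * x t from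
          Finset.sum_congr rfl fun t _ => by
            rw [map_mul, hy t, show (g j) ((f i0 j hij) (b t)) = x t from
              (hg i0 j hij (b t)).trans (hb t)]]
        exact hr0
      obtain ⟨k, hjk, hk0⟩ := hker j _ h0
      have h1 : (∑ t, (f j k hjk (y t)) * f i0 k (hij.trans hjk) (b t)) = 0 := by
        calc (∑ t, (f j k hjk (y t)) * f i0 k (hij.trans hjk) (b t))
            = f j k hjk (∑ t, y t * f i0 j hij (b t)) := by
              rw [map_sum]
              exact Finset.sum_congr rfl fun t _ => by
                rw [map_mul, hf_comp i0 j k hij hjk (b t)]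
          _ = 0 := hk0
      obtain ⟨m', w, c', hc'1, hc'2⟩ :=
        hflat i0 k (hij.trans hjk) n (fun t => f j k hjk (y t)) b h1
      have hmemK : ∀ s, c' s ∈ LinearMap.ker L := by
        intro s
        rw [LinearMap.mem_ker, hLdef, Fintype.linearCombination_apply]
        simpa [smul_eq_mul] using hc'2 s
      have hr' : r = ∑ s, g k (w s) • φ (c' s) := by
        funext t
        have ht : r t = g k (f j k hjk (y t)) := by rw [hg, hy]
        rw [ht, hc'1 t, map_sum]
        simp only [map_mul, hg, Finset.sum_apply, Pi.smul_apply, smul_eq_mul, hφdef]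
      rw [hr']
      exact Submodule.sum_mem _ fun s _ => Submodule.smul_mem _ _ (hφspan (c' s) (hmemK s))
    · rw [Submodule.span_le]
      rintro _ ⟨s, rfl⟩
      have hcs : c s ∈ LinearMap.ker L := hc ▸ Submodule.subset_span ⟨s, rfl⟩
      rw [LinearMap.mem_ker, hLdef, Fintype.linearCombination_apply] at hcs
      simp only [smul_eq_mul] at hcs
      have : l₀ (φ (c s)) = 0 := by
        rw [hl₀, Fintype.linearCombination_apply]
        simp only [hφdef, smul_eq_mul]
        calc (∑ t, g i0 (c s t) * x t)
            = g i0 (∑ t, c s t * b t) := by rw [map_sum]; simp_rw [map_mul, hb]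
          _ = 0 := by rw [hcs, map_zero]
      exact this
  rw [key]
  exact Submodule.fg_span (Set.finite_range _)
end
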